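/- arXiv:0807.4727 — 7 statements merged into one kernel-verified Lean document; each statement's English description precedes it below -/
import Mathlib

section
/- Let s and t be coprime integers greater than 1. For 0 ≤ r ≤ s-1, let a_r(s,t) denote the number of integer vectors (j_0, j_1, ..., j_{t-1}) with 0 ≤ j_0 ≤ j_1 ≤ ... ≤ j_{t-1} ≤ s-1 and j_0 + j_1 + ... + j_{t-1} ≡ r (mod s). Then a_0(s,t) = a_1(s,t) = ... = a_{s-1}(s,t). -/
/-!
Shifting every entry of a weakly increasing tuple by `c` modulo `s` and re-sorting is a
bijection on weakly increasing tuples (re-sorting after shifting by `-c` undoes it), and it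
adds `t * c` to the sum modulo `s`. As `t` is invertible modulo `s`, every residue class of the
sum is carried bijectively onto every other one.
-/

namespace Tuple

variable {α β : Type*} [LinearOrder β] {n : ℕ}

def mapSort (φ : α → β) (f : Fin n → α) : Fin n → β :=
  (φ ∘ f) ∘ sort (φ ∘ f)

theorem monotone_mapSort (φ : α → β) (f : Fin n → α) : Monotone (mapSort φ f) :=
  monotone_sort _

theorem sum_mapSort [AddCommMonoid β] (φ : α → β) (f : Fin n → α) :
    ∑ i, mapSort φ f i = ∑ i, φ (f i) :=
  Equiv.sum_comp (sort (φ ∘ f)) fun i ↦ φ (f i)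

theorem sum_mapSort_add_const [AddCommMonoid β] (f : Fin n → β) (d : β) :
    ∑ i, mapSort (· + d) f i = ∑ i, f i + n • d := by
  rw [sum_mapSort, Finset.sum_add_distrib, Finset.sum_const, Finset.card_univ, Fintype.card_fin]

theorem mapSort_mapSort_of_leftInverse [LinearOrder α] {φ : α → β} {ψ : β → α}
    (h : Function.LeftInverse ψ φ) {f : Fin n → α} (hf : Monotone f) :
    mapSort ψ (mapSort φ f) = f := by
  have hcomp : ψ ∘ mapSort φ f = f ∘ sort (φ ∘ f) := funext fun i ↦ h _
  change (ψ ∘ mapSort φ f) ∘ sort (ψ ∘ mapSort φ f) = f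
  rw [hcomp, comp_perm_comp_sort_eq_comp_sort, sort_eq_refl_iff_monotone.2 hf]
  rfl

end Tuple

open Tuple

theorem Fin.val_sum {n : ℕ} [NeZero n] {ι : Type*} (s : Finset ι) (f : ι → Fin n) :
    (∑ i ∈ s, f i).val = (∑ i ∈ s, (f i).val) % n := by
  classical
  induction s using Finset.induction_on with
  | empty => simp
  | insert a s ha ih => rw [Finset.sum_insert ha, Finset.sum_insert ha, Fin.val_add, ih,
      Nat.add_mod_mod]

section MonotoneSumFibres

variable {G : Type*} [AddCommGroup G] [LinearOrder G] {n : ℕ}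

theorem ncard_monotone_sum_eq_add_nsmul (g c : G) :
    {j : Fin n → G | Monotone j ∧ ∑ i, j i = g}.ncard =
      {j : Fin n → G | Monotone j ∧ ∑ i, j i = g + n • c}.ncard := by
  refine Set.BijOn.ncard_eq (f := mapSort (· + c))
    (Set.InvOn.bijOn (f' := mapSort (· - c)) ?_ ?_ ?_)
  · exact ⟨fun j hj ↦ mapSort_mapSort_of_leftInverse (fun x ↦ add_sub_cancel_right x c) hj.1,
      fun j hj ↦ mapSort_mapSort_of_leftInverse (fun x ↦ sub_add_cancel x c) hj.1⟩
  · rintro j ⟨-, hj⟩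
    exact ⟨monotone_mapSort _ _, by rw [sum_mapSort_add_const, hj]⟩
  · rintro j ⟨-, hj⟩
    refine ⟨monotone_mapSort _ _, ?_⟩
    simp only [sub_eq_add_neg]
    rw [sum_mapSort_add_const, hj, smul_neg, add_neg_cancel_right]

theorem ncard_monotone_sum_eq_of_coprime [Finite G] (hn : (Nat.card G).Coprime n) (g h : G) :
    {j : Fin n → G | Monotone j ∧ ∑ i, j i = g}.ncard =
      {j : Fin n → G | Monotone j ∧ ∑ i, j i = h}.ncard := by
  obtain ⟨c, hc : n • c = h - g⟩ := hn.nsmul_right_bijective.surjective (h - g)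
  rw [ncard_monotone_sum_eq_add_nsmul g c, hc, add_sub_cancel]

end MonotoneSumFibres

theorem gbg_stmt_0_general (s t : ℕ) (hco : Nat.Coprime s t)
    (r₁ r₂ : ℕ) (hr₁ : r₁ < s) (hr₂ : r₂ < s) :
    {j : Fin t → Fin s | Monotone j ∧ (∑ i, (j i : ℕ)) % s = r₁}.ncard =
    {j : Fin t → Fin s | Monotone j ∧ (∑ i, (j i : ℕ)) % s = r₂}.ncard := by
  have : NeZero s := ⟨by omega⟩
  have hmod : ∀ (r : ℕ) (hr : r < s) (j : Fin t → Fin s),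
      (∑ i, (j i : ℕ)) % s = r ↔ ∑ i, j i = ⟨r, hr⟩ := by
    intro r hr j
    rw [Fin.ext_iff, Fin.val_sum]
  simp only [hmod r₁ hr₁, hmod r₂ hr₂]
  exact ncard_monotone_sum_eq_of_coprime (by rwa [Nat.card_fin]) _ _

/-- For coprime `s, t > 1`, the number `a_r(s,t)` of weakly increasing
`t`-tuples with entries in `{0,...,s-1}` and sum `≡ r (mod s)` is the same for every
residue `r`. -/
theorem gbg_stmt_0 (s t : ℕ) (hs : 1 < s) (ht : 1 < t) (hco : Nat.Coprime s t)
    (r₁ r₂ : ℕ) (hr₁ : r₁ < s) (hr₂ : r₂ < s) :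
    {j : Fin t → Fin s | Monotone j ∧ (∑ i, (j i : ℕ)) % s = r₁}.ncard =
    {j : Fin t → Fin s | Monotone j ∧ (∑ i, (j i : ℕ)) % s = r₂}.ncard :=
  gbg_stmt_0_general s t hco r₁ r₂ hr₁ hr₂
end

section
/- Let s and t be coprime integers greater than 1, and for each residue r mod s let a_r(s,t) denote the number of weakly increasing t-tuples in {0,...,s-1} with sum ≡ r (mod s). Then a_r(s,t) = C(s+t, t)/(s+t) for every r. -/
/-! Weakly increasing `t`-tuples in `{0, …, s-1}` are the `t`-element multisets over `ZMod s`.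
Translating a multiset by `c` adds `t • c` to its sum, and `t` is a unit mod `s`, so every residue
class of the sum contains the same number of multisets, namely `multichoose s t / s`; and
`(s + t) * multichoose s t = s * choose (s + t) t`. -/

theorem Monotone.eq_of_perm_ofFn {α : Type*} [LinearOrder α] {n : ℕ} {f g : Fin n → α}
    (hf : Monotone f) (hg : Monotone g) (h : (List.ofFn f).Perm (List.ofFn g)) : f = g :=
  List.ofFn_injective <| h.eq_of_pairwise' hf.sortedLE_ofFn.pairwise hg.sortedLE_ofFn.pairwise

noncomputable def monotoneFinEquivSym (α : Type*) [LinearOrder α] (n : ℕ) :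
    {f : Fin n → α // Monotone f} ≃ Sym α n :=
  Equiv.ofBijective (fun f => ⟨List.ofFn f.1, by simp⟩) <| by
    refine ⟨fun f g hfg => Subtype.ext <| f.2.eq_of_perm_ofFn g.2 ?_, fun m => ?_⟩
    · exact Multiset.coe_eq_coe.mp (congrArg Subtype.val hfg)
    · refine ⟨⟨fun i => (m.1.sort)[i.val], fun i j hij => ?_⟩, Sym.ext ?_⟩
      · exact (Multiset.pairwise_sort m.1 _).rel_get_of_le hij
      · have hl : List.ofFn (fun i : Fin n => (m.1.sort)[i.val]) = m.1.sort :=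
          List.ext_getElem (by simp) (by simp)
        exact (congrArg _ hl).trans (Multiset.sort_eq m.1 _)

theorem monotoneFinEquivSym_apply_coe {α : Type*} [LinearOrder α] {n : ℕ}
    (f : {f : Fin n → α // Monotone f}) :
    (monotoneFinEquivSym α n f : Multiset α) = List.ofFn f.1 :=
  rfl

theorem Nat.card_mul_card_fiber_of_card_fiber_eq {X A : Type*} [Finite X] [Fintype A]
    (f : X → A) (hf : ∀ a b, Nat.card {x // f x = a} = Nat.card {x // f x = b}) (a : A) :
    Nat.card A * Nat.card {x // f x = a} = Nat.card X := by
  rw [← Nat.card_congr (Equiv.sigmaFiberEquiv f), Nat.card_sigma, Nat.card_eq_fintype_card,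
    Finset.sum_congr rfl fun b _ => hf b a, Finset.sum_const, smul_eq_mul, Finset.card_univ]

theorem Sym.sum_map_add_right {A : Type*} [AddCommMonoid A] {n : ℕ} (m : Sym A n) (c : A) :
    (m.map (· + c) : Multiset A).sum = (m : Multiset A).sum + n • c := by
  simp [Multiset.sum_map_add]

theorem Sym.card_sum_fiber_eq {A : Type*} [AddCommGroup A] {n : ℕ}
    (h : Function.Surjective fun c : A => n • c) (a b : A) :
    Nat.card {m : Sym A n // (m : Multiset A).sum = a} =
      Nat.card {m : Sym A n // (m : Multiset A).sum = b} := by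
  obtain ⟨c, hc : n • c = b - a⟩ := h (b - a)
  refine Nat.card_congr <| (Sym.equivCongr (Equiv.addRight c)).subtypeEquiv fun m => ?_
  change _ ↔ (m.map (· + c) : Multiset A).sum = b
  rw [Sym.sum_map_add_right, hc, ← eq_sub_iff_add_eq, sub_sub_cancel]

theorem Sym.card_mul_card_sum_fiber {A : Type*} [AddCommGroup A] [Fintype A] {n : ℕ}
    (h : Function.Surjective fun c : A => n • c) (a : A) :
    Nat.card A * Nat.card {m : Sym A n // (m : Multiset A).sum = a} =
      (Nat.card A).multichoose n := by
  rw [Nat.card_mul_card_fiber_of_card_fiber_eq _ (Sym.card_sum_fiber_eq h),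
    Sym.natCard_sym_eq_multichoose]

theorem ZMod.nsmul_surjective_of_coprime {s n : ℕ} (h : n.Coprime s) :
    Function.Surjective fun c : ZMod s => n • c := fun d =>
  ⟨(ZMod.unitOfCoprime n h)⁻¹ * d, by
    change n • _ = d
    rw [nsmul_eq_mul, ← mul_assoc, ← ZMod.coe_unitOfCoprime n h, Units.mul_inv, one_mul]⟩

theorem ZMod.finEquiv_apply : ∀ {s : ℕ} [NeZero s] (x : Fin s), ZMod.finEquiv s x = (x : ℕ)
  | 0, _, x => x.elim0
  | k + 1, _, x => (ZMod.natCast_zmod_val (n := k + 1) x).symm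

theorem Nat.multichoose_mul_add (s t : ℕ) :
    s.multichoose t * (s + t) = s * (s + t).choose t := by
  rcases s with _ | k
  · cases t <;> simp
  · rw [Nat.multichoose_eq, show k + 1 + t - 1 = k + t by omega,
      show k + 1 + t = k + t + 1 by omega, Nat.choose_mul_succ_eq,
      show k + t + 1 - t = k + 1 by omega, mul_comm]

theorem ncard_monotone_sum_mod_eq_card_sym_sum (s t : ℕ) [NeZero s] {r : ℕ} (hr : r < s) :
    {j : Fin t → Fin s | Monotone j ∧ (∑ i, (j i : ℕ)) % s = r}.ncard =
      Nat.card {m : Sym (ZMod s) t // (m : Multiset (ZMod s)).sum = r} := by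
  let e := (monotoneFinEquivSym (Fin s) t).trans (Sym.equivCongr (ZMod.finEquiv s).toEquiv)
  have he : ∀ j, (e j : Multiset (ZMod s)).sum = ((∑ i, (j.1 i : ℕ) : ℕ) : ZMod s) := by
    intro j
    simp [e, monotoneFinEquivSym_apply_coe, ZMod.finEquiv_apply, List.sum_ofFn]
  have hmod : ∀ n : ℕ, n % s = r ↔ (n : ZMod s) = r := fun n => by
    rw [ZMod.natCast_eq_natCast_iff', Nat.mod_eq_of_lt hr]
  rw [← Nat.card_coe_set_eq]
  exact Nat.card_congr <| (Equiv.subtypeSubtypeEquivSubtypeInter _ _).symm.trans <|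
    e.subtypeEquiv fun j => by rw [he, hmod]

theorem gbg_stmt_2_general (s t : ℕ) (hco : Nat.Coprime s t)
    (r : ℕ) (hr : r < s) :
    {j : Fin t → Fin s | Monotone j ∧ (∑ i, (j i : ℕ)) % s = r}.ncard =
      Nat.choose (s + t) t / (s + t) := by
  have : NeZero s := ⟨by omega⟩
  have hcount :=
    Sym.card_mul_card_sum_fiber (ZMod.nsmul_surjective_of_coprime hco.symm) (r : ZMod s)
  rw [Nat.card_zmod, ← ncard_monotone_sum_mod_eq_card_sym_sum s t hr] at hcount
  refine (Nat.div_eq_of_eq_mul_left (by omega) ?_).symm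
  apply Nat.eq_of_mul_eq_mul_left (show 0 < s by omega)
  calc s * (s + t).choose t = s.multichoose t * (s + t) := (Nat.multichoose_mul_add s t).symm
    _ = s * ({j : Fin t → Fin s | Monotone j ∧ (∑ i, (j i : ℕ)) % s = r}.ncard * (s + t)) := by
      rw [← hcount, mul_assoc]

/-- For coprime `s, t > 1` and any residue `r` mod `s`, the number of
weakly increasing `t`-tuples with entries in `{0,...,s-1}` and sum `≡ r (mod s)`
equals `C(s+t, t)/(s+t)`. -/
theorem gbg_stmt_2 (s t : ℕ) (hs : 1 < s) (ht : 1 < t) (hco : Nat.Coprime s t)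
    (r : ℕ) (hr : r < s) :
    {j : Fin t → Fin s | Monotone j ∧ (∑ i, (j i : ℕ)) % s = r}.ncard =
      Nat.choose (s + t) t / (s + t) :=
  gbg_stmt_2_general s t hco r hr
end

section
/- Let ω = e^{2πI/4} = I be a primitive 4th root of unity, and let t ≥ 4. The vectors j = (0,...,0,1,1,3,3) and j' = (0,...,0,0,0,2,2) in Z^t (each padded with t-4 zeros at the front) are distinct weakly increasing vectors with entries in {0,1,2,3}, yet Σ_i ω^{j_i} = Σ_i ω^{j'_i} and Π_i ω^{j_i} = Π_i ω^{j'_i}. -/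
/-! With `ω = i` the non-zero tails contribute `i + i - i - i = 0 = 1 + 1 - 1 - 1` to the
sums, and their exponent sums `8` and `4` agree modulo `4`. -/

/-- The vector of length `t` obtained by padding the list `l` with `t - l.length`
leading zeros. -/
def padVec (t : ℕ) (l : List ℕ) : Fin t → ℕ :=
  fun i => (List.replicate (t - l.length) 0 ++ l).getD i 0

theorem Complex.exp_two_pi_mul_I_div_four :
    Complex.exp (2 * Real.pi * Complex.I / 4) = Complex.I := by
  rw [show 2 * Real.pi * Complex.I / 4 = Real.pi / 2 * Complex.I by ring]
  exact Complex.exp_pi_div_two_mul_I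

section padVec

variable {t : ℕ} {l : List ℕ}

theorem ofFn_padVec (h : l.length ≤ t) :
    List.ofFn (padVec t l) = List.replicate (t - l.length) 0 ++ l := by
  refine List.ext_getElem (by simp; omega) fun i _ hi => ?_
  simp [padVec, List.getD_eq_getElem?_getD, List.getElem?_eq_getElem hi]

@[to_additive]
theorem prod_padVec {M : Type*} [CommMonoid M] (f : ℕ → M) (h : l.length ≤ t) :
    ∏ i, f (padVec t l i) = f 0 ^ (t - l.length) * (l.map f).prod := by
  rw [← List.prod_ofFn, ← Function.comp_def f, ← List.map_ofFn, ofFn_padVec h]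
  simp

theorem monotone_padVec (h : l.length ≤ t) (hl : l.Pairwise (· ≤ ·)) :
    Monotone (padVec t l) := by
  have : (List.ofFn (padVec t l)).Pairwise (· ≤ ·) := by
    rw [ofFn_padVec h, List.pairwise_append]
    exact ⟨List.pairwise_replicate.2 (.inr le_rfl), hl, by simp⟩
  exact monotone_iff_forall_lt.2 fun i j hij => List.pairwise_ofFn.1 this hij

theorem padVec_lt {n : ℕ} (h : l.length ≤ t) (hn : 0 < n) (hl : ∀ x ∈ l, x < n) (i : Fin t) :
    padVec t l i < n := by
  have : ∀ x ∈ List.ofFn (padVec t l), x < n := by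
    rw [ofFn_padVec h]
    simpa [List.mem_replicate, or_imp, forall_and] using ⟨fun _ => hn, hl⟩
  exact this _ (List.mem_ofFn.2 ⟨i, rfl⟩)

end padVec

/-- For `ω = e^{2πI/4} = I` and `t ≥ 4`, the distinct weakly increasing
vectors `(0,...,0,1,1,3,3)` and `(0,...,0,0,0,2,2)` with entries in `{0,1,2,3}` have
equal sums and equal products of the corresponding powers of `ω`. -/
theorem gbg_stmt_5 (t : ℕ) (ht : 4 ≤ t) :
    Complex.exp (2 * (Real.pi : ℂ) * Complex.I / 4) = Complex.I ∧
    padVec t [1, 1, 3, 3] ≠ padVec t [0, 0, 2, 2] ∧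
    Monotone (padVec t [1, 1, 3, 3]) ∧ Monotone (padVec t [0, 0, 2, 2]) ∧
    (∀ i, padVec t [1, 1, 3, 3] i < 4) ∧ (∀ i, padVec t [0, 0, 2, 2] i < 4) ∧
    (∑ i, Complex.exp (2 * (Real.pi : ℂ) * Complex.I / 4) ^ padVec t [1, 1, 3, 3] i =
     ∑ i, Complex.exp (2 * (Real.pi : ℂ) * Complex.I / 4) ^ padVec t [0, 0, 2, 2] i) ∧
    (∏ i, Complex.exp (2 * (Real.pi : ℂ) * Complex.I / 4) ^ padVec t [1, 1, 3, 3] i =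
     ∏ i, Complex.exp (2 * (Real.pi : ℂ) * Complex.I / 4) ^ padVec t [0, 0, 2, 2] i) := by
  rw [Complex.exp_two_pi_mul_I_div_four]
  refine ⟨rfl, fun h => ?_, monotone_padVec ht (by decide), monotone_padVec ht (by decide),
    padVec_lt ht (by norm_num) (by decide), padVec_lt ht (by norm_num) (by decide), ?_, ?_⟩
  · have := congrArg List.ofFn h
    rw [ofFn_padVec ht, ofFn_padVec ht] at this
    simp at this
  · rw [sum_padVec (Complex.I ^ ·) ht, sum_padVec (Complex.I ^ ·) ht]
    simp [Complex.I_pow_three]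
  · rw [prod_padVec (Complex.I ^ ·) ht, prod_padVec (Complex.I ^ ·) ht]
    simp [Complex.I_pow_three]
end

section
/- Let s be a composite number with s > 3p, where p is the smallest prime divisor of s. Let ω = e^{2πI/s}. Define j to consist of the 2p entries 2, 2, 2+s/p, 2+s/p, ..., 2+(p-1)s/p, 2+(p-1)s/p (each value 2+ks/p appearing twice) and j' to consist of the 2p entries 1, 3, 1+s/p, 3+s/p, ..., 1+(p-1)s/p, 3+(p-1)s/p. Then j and j' are distinct weakly increasing vectors with entries in {0,...,s-1}, and Σ_i ω^{j_i} = Σ_i ω^{j'_i} and Π_i ω^{j_i} = Π_i ω^{j'_i}. -/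
/-!
Write `d = s / p`. Then `ω ^ d` is a primitive `p`-th root of unity, so `∑_{k < p} ω ^ (a + k d) = 0`
for every `a`. Grouping the entries of `j` and `j'` in consecutive pairs, each of the two sums
`∑ ω ^ j i` and `∑ ω ^ j' i` splits into two such vanishing sums. The products agree because the
pairs `(2 + k d, 2 + k d)` and `(1 + k d, 3 + k d)` have the same sum. Finally `3 p < s = p d`
gives `3 < d`, which keeps every entry below `s`.
-/

open Finset

@[to_additive]
theorem Fin.prod_univ_eq_prod_range_pairs {M : Type*} [CommMonoid M] (n : ℕ) (f : ℕ → M) :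
    ∏ i : Fin (2 * n), f i = ∏ k ∈ range n, f (2 * k) * f (2 * k + 1) := by
  rw [Fin.prod_univ_eq_prod_range f]
  induction n with
  | zero => simp
  | succ n ih =>
    rw [Nat.mul_succ, prod_range_succ, prod_range_succ, prod_range_succ, ih, mul_assoc]

theorem IsPrimitiveRoot.sum_pow_add_mul_eq_zero {R : Type*} [CommRing R] [IsDomain R] {ζ : R}
    {d p : ℕ} (h : IsPrimitiveRoot (ζ ^ d) p) (hp : 1 < p) (a : ℕ) :
    ∑ k ∈ range p, ζ ^ (a + k * d) = 0 := by
  simp_rw [pow_add, pow_mul', ← mul_sum, h.geom_sum_eq_zero hp, mul_zero]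

theorem monotone_parity_add_div_two_mul {a b d : ℕ} (hab : a ≤ b) (hbd : b ≤ a + d) :
    Monotone fun i : ℕ => (if i % 2 = 0 then a else b) + i / 2 * d := by
  refine monotone_nat_of_le_succ fun i => ?_
  rcases Nat.mod_two_eq_zero_or_one i with hi | hi
  · have : (i + 1) / 2 = i / 2 := by omega
    simp [hi, Nat.succ_mod_two_eq_one_iff.mpr hi, this, hab]
  · have : (i + 1) / 2 = i / 2 + 1 := by omega
    simp only [hi, one_ne_zero, ↓reduceIte, Nat.succ_mod_two_eq_zero_iff.mpr hi, this, add_mul,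
      one_mul]
    omega

theorem add_div_two_mul_lt {c d p i : ℕ} (hc : c < d) (hi : i < 2 * p) :
    c + i / 2 * d < d * p := by
  have : (i / 2 + 1) * d ≤ p * d := Nat.mul_le_mul_right d (by omega)
  rw [add_mul, one_mul, mul_comm p d] at this
  omega

theorem gbg_stmt_8_general (s : ℕ)
    (hbig : 3 * s.minFac < s) :
    let p := s.minFac
    let ω := Complex.exp (2 * (Real.pi : ℂ) * Complex.I / (s : ℂ))
    let j : Fin (2 * p) → ℕ := fun i => 2 + ((i : ℕ) / 2) * (s / p)
    let j' : Fin (2 * p) → ℕ :=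
      fun i => (if (i : ℕ) % 2 = 0 then 1 else 3) + ((i : ℕ) / 2) * (s / p)
    j ≠ j' ∧ Monotone j ∧ Monotone j' ∧
    (∀ i, j i < s) ∧ (∀ i, j' i < s) ∧
    (∑ i, ω ^ j i = ∑ i, ω ^ j' i) ∧ (∏ i, ω ^ j i = ∏ i, ω ^ j' i) := by
  intro p ω
  have hp : 1 < p := (Nat.minFac_prime (by rintro rfl; simp at hbig)).one_lt
  have hs : s = s / p * p := (Nat.div_mul_cancel (Nat.minFac_dvd s)).symm
  generalize s / p = d at hs ⊢
  intro j j'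
  have hd : 3 < d := Nat.lt_of_mul_lt_mul_right (a := p) (by rw [← hs]; omega)
  have hω : IsPrimitiveRoot (ω ^ d) p :=
    (Complex.isPrimitiveRoot_exp s (by omega)).pow (by omega) hs
  have hhalf (k : ℕ) : (2 * k + 1) / 2 = k := by omega
  have hsum_j : ∑ i, ω ^ j i = 0 := by
    simp [j, Fin.sum_univ_eq_sum_range_pairs p (fun i => ω ^ (2 + i / 2 * d)), hhalf,
      sum_add_distrib, hω.sum_pow_add_mul_eq_zero hp]
  have hsum_j' : ∑ i, ω ^ j' i = 0 := by
    simp [j', Fin.sum_univ_eq_sum_range_pairs p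
      (fun i => ω ^ ((if i % 2 = 0 then 1 else 3) + i / 2 * d)), hhalf,
      sum_add_distrib, hω.sum_pow_add_mul_eq_zero hp]
  have hexp : ∑ i, j i = ∑ i, j' i := by
    simp only [j, j', Fin.sum_univ_eq_sum_range_pairs p (fun i => 2 + i / 2 * d),
      Fin.sum_univ_eq_sum_range_pairs p (fun i => (if i % 2 = 0 then 1 else 3) + i / 2 * d)]
    refine sum_congr rfl fun k _ => ?_
    simp only [Nat.mul_div_cancel_left k two_pos, hhalf]
    split_ifs <;> omega
  refine ⟨fun h => by simpa [j, j'] using congrFun h ⟨0, by omega⟩,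
    fun a b h => Nat.add_le_add_left (Nat.mul_le_mul_right d (Nat.div_le_div_right h)) 2,
    fun a b h => monotone_parity_add_div_two_mul (by norm_num) (by omega) h,
    fun i => hs ▸ add_div_two_mul_lt (by omega) i.2,
    fun i => hs ▸ add_div_two_mul_lt (by split <;> omega) i.2,
    hsum_j.trans hsum_j'.symm, by simp only [prod_pow_eq_pow_sum, hexp]⟩

/-- For `s` composite with `s > 3p`, `p` the smallest prime divisor of
`s`, and `ω = e^{2πI/s}`, the distinct weakly increasing `2p`-tuples
`j = (2, 2, 2+s/p, 2+s/p, ..., 2+(p-1)s/p, 2+(p-1)s/p)` and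
`j' = (1, 3, 1+s/p, 3+s/p, ..., 1+(p-1)s/p, 3+(p-1)s/p)`, with entries in
`{0,...,s-1}`, have equal sums and equal products of the corresponding powers of `ω`. -/
theorem gbg_stmt_8 (s : ℕ) (hs1 : 1 < s) (hs : ¬ Nat.Prime s)
    (hbig : 3 * s.minFac < s) :
    let p := s.minFac
    let ω := Complex.exp (2 * (Real.pi : ℂ) * Complex.I / (s : ℂ))
    let j : Fin (2 * p) → ℕ := fun i => 2 + ((i : ℕ) / 2) * (s / p)
    let j' : Fin (2 * p) → ℕ :=
      fun i => (if (i : ℕ) % 2 = 0 then 1 else 3) + ((i : ℕ) / 2) * (s / p)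
    j ≠ j' ∧ Monotone j ∧ Monotone j' ∧
    (∀ i, j i < s) ∧ (∀ i, j' i < s) ∧
    (∑ i, ω ^ j i = ∑ i, ω ^ j' i) ∧ (∏ i, ω ^ j i = ∏ i, ω ^ j' i) :=
  gbg_stmt_8_general s hbig
end

section
/- Let s, t > 1 with gcd(s,t) = 1, let ω = e^{2πI/s}, and let π be a t-core partition with associated vector n(π) = (n_0, n_1, ..., n_{t-1}) ∈ Z^t (satisfying Σ n_i = 0) under the standard bijection between t-cores and such vectors. Then the GBG-rank of π mod s equals [Σ_{i=0}^{t-1} ω^{i+1}(ω^{t n_i} − 1)] / [(1 − ω)(1 − ω^t)]. -/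
/-- A partition, given by its weakly decreasing sequence of parts
(indexed from 0, eventually zero). -/
structure YPartition where
  parts : ℕ → ℕ
  antitone : Antitone parts
  finite_support : ∃ N, ∀ n, N ≤ n → parts n = 0

namespace YPartition

/-- `rcount P s c` is the number of cells of the Young diagram of `P` labelled `c` in
the `s`-residue diagram: the cell in row `a`, column `b` (0-indexed) is labelled
`(b - a) mod s`. -/
noncomputable def rcount (P : YPartition) (s c : ℕ) : ℕ :=
  Set.ncard {p : ℕ × ℕ | p.2 < P.parts p.1 ∧ ((p.2 : ℤ) - (p.1 : ℤ)) % (s : ℤ) = (c : ℤ)}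

/-- The GBG-rank of `P` mod `s`: `∑_{c=0}^{s-1} r_c(P,s) ω_s^c` with `ω_s = e^{2πI/s}`. -/
noncomputable def gbg (P : YPartition) (s : ℕ) : ℂ :=
  ∑ c ∈ Finset.range s,
    (P.rcount s c : ℂ) * Complex.exp (2 * (Real.pi : ℂ) * Complex.I / (s : ℂ)) ^ c

/-- The parts of the conjugate partition of `P`. -/
noncomputable def conjParts (P : YPartition) (j : ℕ) : ℕ :=
  Set.ncard {i : ℕ | j < P.parts i}

/-- The hook length of the cell in row `i`, column `j` (0-indexed). -/
noncomputable def hookLength (P : YPartition) (i j : ℕ) : ℕ :=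
  (P.parts i - j) + (P.conjParts j - i) - 1

/-- `P` is a `t`-core: the Young diagram of `P` has no rim hook of length `t`,
equivalently no cell of `P` has hook length `t`. -/
noncomputable def IsCore (t : ℕ) (P : YPartition) : Prop :=
  ∀ i j, j < P.parts i → P.hookLength i j ≠ t

/-- The `n`-vector of `P` mod `t`: `n_i = r_i - r_{i+1}` (indices mod `t`). -/
noncomputable def nvec (P : YPartition) (t i : ℕ) : ℤ :=
  (P.rcount t i : ℤ) - (P.rcount t ((i + 1) % t) : ℤ)

end YPartition

/-!
Multiplying by `ω - 1` turns each row of the cell sum `∑ ω^(j - i)` into a telescoping geometric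
sum, so `(ω - 1) · GBG = ∑_i (ω^(β_i) - ω^(-i))` over the beta-numbers `β_i = λ_i - i`. For a
`t`-core the set of beta-numbers is closed under subtracting `t` (a missing `β_i - t` would produce
a hook of length `t`), so on the `t`-abacus the runner through `c + 1` is filled exactly below some
level `n_c`. Counting residues row by row identifies `n_c` with `r_c - r_{c+1}`, and comparing each
runner with that of the empty partition (level `0`), multiplication by `ω^t - 1` collapses the
runner's contribution to `ω^(c+1) (ω^(t n_c) - 1)`.
-/

open Finset

lemma emod_eq_natCast_mod_iff_dvd_sub (x : ℤ) (t d : ℕ) :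
    x % t = ((d % t : ℕ) : ℤ) ↔ (t : ℤ) ∣ x - d := by
  rw [Int.natCast_mod, Int.emod_eq_emod_iff_emod_sub_eq_zero, Int.dvd_iff_emod_eq_zero]

lemma sum_eq_sum_range_sum_filter_dvd {ι M : Type*} [AddCommMonoid M] (s : Finset ι) (g : ι → ℤ)
    (φ : ι → M) {t : ℕ} (ht : 0 < t) :
    ∑ i ∈ s, φ i = ∑ c ∈ range t, ∑ i ∈ s with (t : ℤ) ∣ g i - (c + 1), φ i := by
  have hmod : ∀ i, 0 ≤ (g i - 1) % t ∧ (g i - 1) % t < t := fun i =>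
    ⟨Int.emod_nonneg _ (by omega), Int.emod_lt_of_pos _ (by omega)⟩
  rw [← sum_fiberwise_of_maps_to (g := fun i => ((g i - 1) % t).toNat) (t := range t)
    (fun i _ => mem_range.2 (by have := hmod i; omega))]
  refine sum_congr rfl fun c hc => sum_congr (filter_congr fun i _ => ?_) fun _ _ => rfl
  have := hmod i
  rw [show g i - (c + 1) = g i - 1 - c by ring, ← emod_eq_natCast_mod_iff_dvd_sub,
    Nat.mod_eq_of_lt (mem_range.1 hc)]
  omega

lemma sum_range_boole_dvd_sub_boole_dvd (t a : ℤ) (L : ℕ) :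
    ∑ j ∈ range L, ((if t ∣ (j : ℤ) + a + 1 then 1 else 0) - if t ∣ (j : ℤ) + a then 1 else 0) =
      ((if t ∣ (L : ℤ) + a then 1 else 0) - if t ∣ a then 1 else 0 : ℤ) := by
  simpa [add_right_comm _ (1 : ℤ)] using
    sum_range_sub (fun j : ℕ => if t ∣ (j : ℤ) + a then (1 : ℤ) else 0) L

section Field

variable {K : Type*} [Field K] {ω : K} {s : ℕ}

lemma sum_range_boole_mul_pow (hs : 0 < s) (hω : ω ^ s = 1) (x : ℤ) :
    ∑ c ∈ range s, (if x % s = c then 1 else 0) * ω ^ c = ω ^ x := by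
  have hx := Int.emod_nonneg x (Int.natCast_ne_zero.2 hs.ne')
  have hxs := Int.emod_lt_of_pos x (Int.natCast_pos.2 hs)
  have hcond : ∀ c : ℕ, x % s = c ↔ (x % s).toNat = c := fun c => by omega
  simp_rw [boole_mul, hcond, sum_ite_eq, mem_range]
  rw [if_pos (by omega), ← zpow_natCast, Int.toNat_of_nonneg hx]
  conv_rhs => rw [← Int.emod_add_mul_ediv x s]
  rw [zpow_add₀ (by rintro rfl; simp [zero_pow hs.ne'] at hω), zpow_mul, zpow_natCast, hω,
    one_zpow, mul_one]

lemma sub_one_mul_sum_range_zpow (hω : ω ≠ 0) (a : ℤ) (L : ℕ) :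
    (ω - 1) * ∑ j ∈ range L, ω ^ ((j : ℤ) + a) = ω ^ ((L : ℤ) + a) - ω ^ a := by
  simp_rw [zpow_add₀ hω, zpow_natCast, ← sum_mul, mul_comm (ω - 1), mul_comm _ (ω ^ a),
    mul_assoc, geom_sum_mul]
  ring

lemma sub_one_mul_sum_Ico_zpow {u : K} (hu : u ≠ 0) {a b : ℤ} (hab : a ≤ b) :
    (u - 1) * ∑ k ∈ Ico a b, u ^ k = u ^ b - u ^ a := by
  induction b, hab using Int.leInduction with
  | base => simp
  | succ b hab ih =>
    rw [← insert_Ico_right_eq_Ico_add_one hab, sum_insert right_notMem_Ico, mul_add, ih,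
      zpow_add_one₀ hu]
    ring

end Field

/-- On the `t`-abacus of the set `Set.range f`, the runner through `c + 1` holds beads exactly at
the levels `k < n`. -/
def RunnerFilledBelow (f : ℕ → ℤ) (t c : ℕ) (n : ℤ) : Prop :=
  ∀ k : ℤ, (∃ i, f i = c + 1 + t * k) ↔ k < n

section Abacus

variable {f : ℕ → ℤ} {t m c : ℕ}

lemma neg_lt_iff_of_eq_neg (hf : StrictAnti f) (hfm : ∀ i, t * m ≤ i → f i = -i) (i : ℕ) :
    -((t * m : ℕ) : ℤ) < f i ↔ i < t * m := by
  constructor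
  · intro h
    by_contra! hi
    rw [hfm i hi] at h
    omega
  · intro hi
    rw [← hfm _ le_rfl]
    exact hf hi

lemma exists_eq_add_mul_neg_sub_one (hfm : ∀ i, t * m ≤ i → f i = -i) (hc : c < t) :
    ∃ i, f i = c + 1 + t * (-m - 1) := by
  obtain ⟨d, rfl⟩ := Nat.exists_eq_add_of_lt hc
  refine ⟨(c + d + 1) * m + d, ?_⟩
  rw [hfm _ (Nat.le_add_right _ _)]
  push_cast
  ring

lemma neg_le_of_runnerFilledBelow (hfm : ∀ i, t * m ≤ i → f i = -i) (hc : c < t) {n : ℤ}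
    (hn : RunnerFilledBelow f t c n) : -(m : ℤ) ≤ n := by
  have := (hn _).1 (exists_eq_add_mul_neg_sub_one hfm hc)
  omega

/-- Truncating at row `t * m` cuts every runner at the same level `-m`. -/
lemma sum_filter_dvd_eq_sum_Ico {M : Type*} [AddCommMonoid M] (φ : ℤ → M) (hf : StrictAnti f)
    (hfm : ∀ i, t * m ≤ i → f i = -i) (hc : c < t) {n : ℤ} (hn : RunnerFilledBelow f t c n) :
    ∑ i ∈ range (t * m) with (t : ℤ) ∣ f i - (c + 1), φ (f i) =
      ∑ k ∈ Ico (-(m : ℤ)) n, φ (c + 1 + t * k) := by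
  have hwin := neg_lt_iff_of_eq_neg hf hfm
  have hlevel : ∀ i, (t : ℤ) ∣ f i - (c + 1) → f i = c + 1 + t * ((f i - (c + 1)) / t) :=
    fun i hi => by rw [Int.mul_ediv_cancel' hi]; ring
  refine sum_nbij (fun i => (f i - (c + 1)) / t) (fun i hi => ?_) (fun i hi j hj hij => ?_)
    (fun k hk => ?_) (fun i hi => by rw [← hlevel i (mem_filter.1 hi).2])
  · have hi' := hlevel i (mem_filter.1 hi).2
    have hwin_i := (hwin i).2 (mem_range.1 (mem_filter.1 hi).1)
    refine mem_Ico.2 ⟨?_, (hn _).1 ⟨i, hi'⟩⟩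
    push_cast at hwin_i
    nlinarith
  · simp only at hij
    refine hf.injective ?_
    rw [hlevel i (mem_filter.1 hi).2, hlevel j (mem_filter.1 hj).2, hij]
  · obtain ⟨hmk, hkn⟩ := mem_Ico.1 hk
    obtain ⟨i, hi⟩ := (hn k).2 hkn
    have ht : (0 : ℤ) < t := by omega
    refine ⟨i, mem_filter.2 ⟨mem_range.2 ((hwin i).1 ?_), ⟨k, by rw [hi]; ring⟩⟩, ?_⟩
    · push_cast
      nlinarith
    · simp only [hi, add_sub_cancel_left, Int.mul_ediv_cancel_left _ ht.ne']

end Abacus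

lemma runnerFilledBelow_neg {t c : ℕ} (hc : c < t) :
    RunnerFilledBelow (fun i : ℕ => -(i : ℤ)) t c 0 := by
  intro k
  constructor
  · rintro ⟨i, hi⟩
    dsimp only at hi
    nlinarith [mul_nonneg (Int.natCast_nonneg t) (Int.natCast_nonneg i)]
  · intro hk
    refine ⟨(-(c + 1 + t * k : ℤ)).toNat, ?_⟩
    have : (c : ℤ) + 1 + t * k ≤ 0 := by nlinarith
    change -(((-(c + 1 + t * k : ℤ)).toNat : ℕ) : ℤ) = _
    omega

namespace YPartition

variable (P : YPartition)

def beta (i : ℕ) : ℤ := P.parts i - i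

lemma beta_strictAnti : StrictAnti P.beta := fun i j hij => by
  have := P.antitone hij.le
  simp only [beta]
  omega

lemma parts_eq_zero_of_le {N i : ℕ} (hN : P.parts N = 0) (hi : N ≤ i) : P.parts i = 0 :=
  Nat.eq_zero_of_le_zero (hN ▸ P.antitone hi)

lemma beta_eq_neg_of_le {N i : ℕ} (hN : P.parts N = 0) (hi : N ≤ i) : P.beta i = -i := by
  simp [beta, P.parts_eq_zero_of_le hN hi]

lemma exists_parts_mul_eq_zero {t : ℕ} (ht : 0 < t) : ∃ m, P.parts (t * m) = 0 := by
  obtain ⟨N, hN⟩ := P.finite_support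
  exact ⟨N, hN _ (Nat.le_mul_of_pos_left N ht)⟩

lemma rcount_eq_sum_card {N : ℕ} (hN : P.parts N = 0) (s c : ℕ) :
    P.rcount s c = ∑ i ∈ range N, #{j ∈ range (P.parts i) | (((j : ℕ) : ℤ) - i) % s = c} := by
  have hcells : {p : ℕ × ℕ | p.2 < P.parts p.1 ∧ ((p.2 : ℤ) - p.1) % s = c} =
      ↑{p ∈ range N ×ˢ range (P.parts 0) | p.2 < P.parts p.1 ∧ ((p.2 : ℤ) - p.1) % s = c} := by
    ext ⟨i, j⟩
    simp only [Set.mem_ofPred_eq, coe_filter, mem_product, mem_range]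
    constructor
    · rintro ⟨hj, hc⟩
      refine ⟨⟨?_, hj.trans_le (P.antitone (Nat.zero_le i))⟩, hj, hc⟩
      by_contra! hi
      rw [P.parts_eq_zero_of_le hN hi] at hj
      omega
    · exact fun h => h.2
  rw [rcount, hcells, Set.ncard_coe_finset, card_filter, sum_product]
  refine sum_congr rfl fun i _ => ?_
  rw [← card_filter]
  congr 1
  ext j
  simp only [mem_filter, mem_range]
  have := P.antitone (Nat.zero_le i)
  constructor
  · exact fun h => ⟨h.2.1, h.2.2⟩
  · exact fun h => ⟨by omega, h⟩

lemma sub_one_mul_sum_rcount_mul_pow {K : Type*} [Field K] {ω : K} {s : ℕ} (hs : 0 < s)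
    (hω : ω ^ s = 1) {N : ℕ} (hN : P.parts N = 0) :
    (ω - 1) * ∑ c ∈ range s, (P.rcount s c : K) * ω ^ c =
      ∑ i ∈ range N, (ω ^ P.beta i - ω ^ (-(i : ℤ))) := by
  have hω0 : ω ≠ 0 := by rintro rfl; simp [zero_pow hs.ne'] at hω
  have hcells : ∑ c ∈ range s, (P.rcount s c : K) * ω ^ c =
      ∑ i ∈ range N, ∑ j ∈ range (P.parts i), ω ^ ((j : ℤ) + -i) := by
    simp_rw [rcount_eq_sum_card P hN, Nat.cast_sum, natCast_card_filter, sum_mul]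
    rw [sum_comm]
    refine sum_congr rfl fun i _ => ?_
    rw [sum_comm]
    exact sum_congr rfl fun j _ => sum_range_boole_mul_pow hs hω _
  rw [hcells, mul_sum]
  refine sum_congr rfl fun i _ => ?_
  rw [sub_one_mul_sum_range_zpow hω0, beta, ← sub_eq_add_neg]

lemma nvec_eq_card_sub_card {N : ℕ} (hN : P.parts N = 0) {t c : ℕ} (hc : c < t) :
    P.nvec t c = (#{i ∈ range N | (t : ℤ) ∣ P.beta i - (c + 1)} : ℤ) -
      #{i ∈ range N | (t : ℤ) ∣ -((i : ℕ) : ℤ) - (c + 1)} := by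
  have hrow : ∀ d : ℕ, (P.rcount t (d % t) : ℤ) = ∑ i ∈ range N,
      ∑ j ∈ range (P.parts i), if (t : ℤ) ∣ (j : ℤ) - i - d then 1 else 0 := fun d => by
    simp_rw [rcount_eq_sum_card P hN, Nat.cast_sum, natCast_card_filter,
      emod_eq_natCast_mod_iff_dvd_sub]
  have hc' := hrow c
  rw [Nat.mod_eq_of_lt hc] at hc'
  rw [nvec, hc', hrow, natCast_card_filter, natCast_card_filter, ← sum_sub_distrib,
    ← sum_sub_distrib]
  refine sum_congr rfl fun i _ => ?_
  rw [← sum_sub_distrib]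
  convert sum_range_boole_dvd_sub_boole_dvd t (-i - (c + 1)) (P.parts i) using 4
  all_goals push_cast [beta]; ring_nf

variable {P} {t : ℕ}

lemma conjParts_eq_of_lt_iff {j F : ℕ} (h : ∀ i, j < P.parts i ↔ i < F) : P.conjParts j = F := by
  have hset : {i | j < P.parts i} = ↑(range F) := by ext i; simp [h i]
  rw [conjParts, hset, Set.ncard_coe_finset, card_range]

/-- If `x = β_i - t` were not a beta-number, let `F` be the first row with `β_F < x`; then column
`j = x + F - 1` has length `F`, and the cell `(i, j)` has hook length exactly `t`. -/
lemma IsCore.exists_beta_eq_sub (hP : IsCore t P) (i : ℕ) :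
    ∃ i', P.beta i' = P.beta i - t := by
  by_contra! hx
  set x := P.beta i - t
  have hex : ∃ k, P.beta k < x := ⟨(P.parts 0 - x + 1).toNat, by
    have := P.antitone (Nat.zero_le (P.parts 0 - x + 1).toNat)
    simp only [beta] at *
    omega⟩
  set F := Nat.find hex
  have hF : P.beta F < x := Nat.find_spec hex
  have hbefore : ∀ k < F, x < P.beta k := fun k hk =>
    lt_of_le_of_ne (not_lt.1 (Nat.find_min hex hk)) (hx k).symm
  have hiF : i < F := by
    by_contra! hFi
    have := P.antitone hFi
    have := hx i
    simp only [x, beta] at *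
    omega
  have hFt : F ≤ i + t := Nat.find_min' hex <| lt_of_le_of_ne
    (by have := P.antitone (Nat.le_add_right i t); simp only [x, beta]; push_cast; omega)
    (hx (i + t))
  have hcol : ∀ i', (x + F - 1).toNat < P.parts i' ↔ i' < F := by
    intro i'
    have hF1 := hbefore (F - 1) (by omega)
    simp only [beta] at hF hF1
    constructor
    · intro h
      by_contra! h'
      have := P.antitone h'
      omega
    · intro h
      have := P.antitone (Nat.le_sub_one_of_lt h)
      omega
  refine hP i (x + F - 1).toNat ((hcol i).2 hiF) ?_
  rw [hookLength, conjParts_eq_of_lt_iff hcol]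
  have := (hcol i).2 hiF
  simp only [x, beta] at *
  omega

lemma IsCore.exists_beta_eq_sub_mul (hP : IsCore t P) (i k : ℕ) :
    ∃ i', P.beta i' = P.beta i - t * k := by
  induction k with
  | zero => exact ⟨i, by simp⟩
  | succ k ih =>
    obtain ⟨i', hi'⟩ := ih
    obtain ⟨i'', hi''⟩ := hP.exists_beta_eq_sub i'
    exact ⟨i'', by rw [hi'', hi']; push_cast; ring⟩

lemma IsCore.exists_runnerFilledBelow (hP : IsCore t P) {c : ℕ} (hc : c < t) :
    ∃ n, RunnerFilledBelow P.beta t c n := by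
  obtain ⟨m, hm⟩ := P.exists_parts_mul_eq_zero (Nat.zero_lt_of_lt hc)
  have hbdd : ∃ b : ℤ, ∀ k, (∃ i, P.beta i = c + 1 + t * k) → k ≤ b := by
    refine ⟨P.parts 0, fun k ⟨i, hi⟩ => ?_⟩
    have := P.antitone (Nat.zero_le i)
    simp only [beta] at hi
    nlinarith
  obtain ⟨g, ⟨i₀, hi₀⟩, hg⟩ := Int.exists_greatest_of_bdd hbdd
    ⟨_, exists_eq_add_mul_neg_sub_one (fun i hi => P.beta_eq_neg_of_le hm hi) hc⟩
  refine ⟨g + 1, fun k => ⟨fun hk => Int.lt_add_one_of_le (hg k hk), fun hk => ?_⟩⟩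
  obtain ⟨i, hi⟩ := hP.exists_beta_eq_sub_mul i₀ (g - k).toNat
  exact ⟨i, by rw [hi, hi₀, Int.toNat_of_nonneg (by omega)]; ring⟩

lemma IsCore.runnerFilledBelow_nvec (hP : IsCore t P) {c : ℕ} (hc : c < t) :
    RunnerFilledBelow P.beta t c (P.nvec t c) := by
  obtain ⟨n, hn⟩ := hP.exists_runnerFilledBelow hc
  obtain ⟨m, hm⟩ := P.exists_parts_mul_eq_zero (Nat.zero_lt_of_lt hc)
  have hfm : ∀ i, t * m ≤ i → P.beta i = -i := fun i hi => P.beta_eq_neg_of_le hm hi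
  suffices P.nvec t c = n by rwa [this]
  rw [nvec_eq_card_sub_card P hm hc, card_eq_sum_ones, card_eq_sum_ones,
    sum_filter_dvd_eq_sum_Ico (fun _ => 1) P.beta_strictAnti hfm hc hn,
    sum_filter_dvd_eq_sum_Ico (f := fun i : ℕ => -(i : ℤ)) (fun _ => 1)
      (fun i j hij => by simpa using hij) (fun _ _ => rfl) hc (runnerFilledBelow_neg hc)]
  have := neg_le_of_runnerFilledBelow hfm hc hn
  simp only [sum_const, Int.card_Ico, smul_eq_mul, mul_one]
  omega

theorem IsCore.sub_one_mul_sum_zpow_beta_sub (hP : IsCore t P) (ht : 0 < t) {K : Type*}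
    [Field K] {ω : K} (hω : ω ≠ 0) {m : ℕ} (hm : P.parts (t * m) = 0) :
    (ω ^ t - 1) * ∑ i ∈ range (t * m), (ω ^ P.beta i - ω ^ (-(i : ℤ))) =
      ∑ c ∈ range t, ω ^ (c + 1) * (ω ^ ((t : ℤ) * P.nvec t c) - 1) := by
  have hfm : ∀ i, t * m ≤ i → P.beta i = -i := fun i hi => P.beta_eq_neg_of_le hm hi
  have hu : ω ^ t ≠ 0 := pow_ne_zero t hω
  rw [sum_sub_distrib, sum_eq_sum_range_sum_filter_dvd _ P.beta (fun i => ω ^ P.beta i) ht,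
    sum_eq_sum_range_sum_filter_dvd _ (fun i : ℕ => -(i : ℤ)) (fun i : ℕ => ω ^ (-(i : ℤ))) ht,
    ← sum_sub_distrib, mul_sum]
  refine sum_congr rfl fun c hc => ?_
  have hc := mem_range.1 hc
  have hterm : ∀ k : ℤ, ω ^ ((c : ℤ) + 1 + t * k) = ω ^ (c + 1) * (ω ^ t) ^ k := fun k => by
    rw [zpow_add₀ hω, zpow_mul]
    norm_cast
  rw [sum_filter_dvd_eq_sum_Ico (fun x => ω ^ x) P.beta_strictAnti hfm hc
      (hP.runnerFilledBelow_nvec hc),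
    sum_filter_dvd_eq_sum_Ico (f := fun i : ℕ => -(i : ℤ)) (fun x => ω ^ x)
      (fun i j hij => by simpa using hij) (fun _ _ => rfl) hc (runnerFilledBelow_neg hc)]
  simp_rw [hterm, ← mul_sum]
  calc (ω ^ t - 1) * (ω ^ (c + 1) * ∑ k ∈ Ico (-(m : ℤ)) (P.nvec t c), (ω ^ t) ^ k -
        ω ^ (c + 1) * ∑ k ∈ Ico (-(m : ℤ)) 0, (ω ^ t) ^ k)
      = ω ^ (c + 1) * ((ω ^ t - 1) * ∑ k ∈ Ico (-(m : ℤ)) (P.nvec t c), (ω ^ t) ^ k -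
        (ω ^ t - 1) * ∑ k ∈ Ico (-(m : ℤ)) 0, (ω ^ t) ^ k) := by ring
    _ = ω ^ (c + 1) * (ω ^ ((t : ℤ) * P.nvec t c) - 1) := by
      rw [sub_one_mul_sum_Ico_zpow hu (neg_le_of_runnerFilledBelow hfm hc
          (hP.runnerFilledBelow_nvec hc)), sub_one_mul_sum_Ico_zpow hu (by omega), zpow_mul,
        zpow_natCast, zpow_zero]
      ring

end YPartition

/-- For coprime `s, t > 1`, `ω = e^{2πI/s}`, and a `t`-core `P` with
`n`-vector `(n_0,...,n_{t-1})`, the GBG-rank of `P` mod `s` equals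
`(∑_{i=0}^{t-1} ω^{i+1}(ω^{t n_i} − 1)) / ((1 − ω)(1 − ω^t))`. -/
theorem gbg_stmt_10 (s t : ℕ) (hs : 1 < s) (ht : 1 < t) (hco : Nat.Coprime s t)
    (P : YPartition) (hP : YPartition.IsCore t P) :
    P.gbg s =
      (∑ i ∈ Finset.range t,
          Complex.exp (2 * (Real.pi : ℂ) * Complex.I / (s : ℂ)) ^ (i + 1) *
            (Complex.exp (2 * (Real.pi : ℂ) * Complex.I / (s : ℂ)) ^ ((t : ℤ) * P.nvec t i)
              - 1)) /
        ((1 - Complex.exp (2 * (Real.pi : ℂ) * Complex.I / (s : ℂ))) *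
          (1 - Complex.exp (2 * (Real.pi : ℂ) * Complex.I / (s : ℂ)) ^ t)) := by
  set ω := Complex.exp (2 * (Real.pi : ℂ) * Complex.I / (s : ℂ))
  have hprim : IsPrimitiveRoot ω s := Complex.isPrimitiveRoot_exp s (by omega)
  have hω1 : ω ≠ 1 := hprim.ne_one hs
  have hωt : ω ^ t ≠ 1 := fun h => by
    have := hco.eq_one_of_dvd ((hprim.pow_eq_one_iff_dvd t).1 h)
    omega
  obtain ⟨m, hm⟩ := P.exists_parts_mul_eq_zero (t := t) (by omega)
  rw [eq_div_iff (mul_ne_zero (sub_ne_zero.2 hω1.symm) (sub_ne_zero.2 hωt.symm))]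
  calc P.gbg s * ((1 - ω) * (1 - ω ^ t)) = (ω ^ t - 1) * ((ω - 1) * P.gbg s) := by ring
    _ = (ω ^ t - 1) * ∑ i ∈ range (t * m), (ω ^ P.beta i - ω ^ (-(i : ℤ))) := by
      rw [YPartition.gbg, P.sub_one_mul_sum_rcount_mul_pow (by omega) hprim.pow_eq_one hm]
    _ = _ := hP.sub_one_mul_sum_zpow_beta_sub (by omega) (Complex.exp_ne_zero _) hm
end

section
/- Let s, t > 1 with gcd(s,t) = 1. The number ν(s,t) of distinct values that the GBG-rank mod s of a t-core partition can take satisfies ν(s,t) ≤ C(s+t, s)/(s+t). -/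
open Finset

lemma IsPrimitiveRoot.pow_eq_pow_of_natCast_eq {M : Type*} [CommMonoid M]
    {ζ : M} {s a b : ℕ} (hζ : IsPrimitiveRoot ζ s) (h : (a : ZMod s) = b) : ζ ^ a = ζ ^ b := by
  rw [← pow_mod_orderOf, ← hζ.eq_orderOf, (ZMod.natCast_eq_natCast_iff' a b s).1 h,
    hζ.eq_orderOf, pow_mod_orderOf]

lemma IsPrimitiveRoot.sum_range_pow_eq_zero {R : Type*} [CommRing R] [IsDomain R] {ζ : R}
    {s N : ℕ} (hζ : IsPrimitiveRoot ζ s) (hs : 1 < s) (hsN : s ∣ N) :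
    ∑ k ∈ range N, ζ ^ k = 0 := by
  have hζN : ζ ^ N - 1 = 0 := by rw [(hζ.pow_eq_one_iff_dvd N).2 hsN, sub_self]
  rw [← geom_sum_mul] at hζN
  exact (mul_eq_zero.1 hζN).resolve_right (sub_ne_zero.2 (hζ.ne_one hs))

lemma card_sym_filter_sum_eq_mul_card_le {G : Type*} [AddCommGroup G] [Fintype G] [DecidableEq G]
    {t : ℕ} (h : (Nat.card G).Coprime t) (τ : G) :
    #{m : Sym G t | (m : Multiset G).sum = τ} * Fintype.card G ≤
      (Fintype.card G + t - 1).choose t := by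
  have sum_map_add (m : Sym G t) (k : G) :
      (m.map (· + k) : Multiset G).sum = (m : Multiset G).sum + t • k := by
    rw [Sym.coe_map, Multiset.sum_map_add, Multiset.map_id', Multiset.map_const',
      Multiset.sum_replicate, Sym.card_coe]
  rw [← Sym.card_sym_eq_choose, ← card_univ (α := Sym G t), ← card_univ (α := G), ← card_product]
  refine card_le_card_of_injOn (fun p => p.1.map (· + p.2)) (fun _ _ => mem_coe.2 (mem_univ _)) ?_
  rintro ⟨m, k⟩ hm ⟨m', k'⟩ hm' heq
  simp only [coe_product, Set.mem_prod, coe_filter, Set.mem_ofPred_eq] at hm hm'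
  have hk : k = k' := by
    have := congrArg (fun m : Sym G t => (m : Multiset G).sum) heq
    simp only [sum_map_add, hm.1, hm'.1, add_right_inj] at this
    exact (nsmulCoprime h).injective this
  subst hk
  exact Prod.ext (Sym.map_injective (add_left_injective k) _ heq) rfl

lemma le_choose_div_of_mul_le {K s t : ℕ} (hs : 0 < s) (h : K * s ≤ (s + t - 1).choose t) :
    K ≤ (s + t).choose s / (s + t) := by
  have hpascal : (s + t - 1).choose t * (s + t) = (s + t).choose s * s := by
    have := Nat.choose_mul_succ_eq (s + t - 1) t
    rwa [Nat.sub_add_cancel (by omega), Nat.add_sub_cancel, ← Nat.choose_symm_add] at this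
  rw [Nat.le_div_iff_mul_le (by omega)]
  refine Nat.le_of_mul_le_mul_right ?_ hs
  calc K * (s + t) * s = K * s * (s + t) := by ring
    _ ≤ (s + t - 1).choose t * (s + t) := Nat.mul_le_mul_right _ h
    _ = (s + t).choose s * s := hpascal

/-- On the `t`-abacus whose beads sit at the positions in `Y`, this is the set of first empty
positions of the `t` runners, provided every bead rests on the one below it. -/
def runnerGaps (t : ℕ) (Y : Finset ℕ) : Finset ℕ :=
  (Y.map (addRightEmbedding t) ∪ range t) \ Y

lemma sum_runnerGaps {M : Type*} [AddCommGroup M] {t : ℕ} {Y : Finset ℕ}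
    (hY : ∀ y ∈ Y, t ≤ y → y - t ∈ Y) (f : ℕ → M) :
    ∑ e ∈ runnerGaps t Y, f e = ∑ y ∈ Y, f (y + t) - ∑ y ∈ Y, f y + ∑ r ∈ range t, f r := by
  have hsub : Y ⊆ Y.map (addRightEmbedding t) ∪ range t := by
    intro y hy
    by_cases hty : t ≤ y
    · exact mem_union_left _ (mem_map.2 ⟨y - t, hY y hy hty, Nat.sub_add_cancel hty⟩)
    · exact mem_union_right _ (mem_range.2 (not_le.1 hty))
  have hdisj : Disjoint (Y.map (addRightEmbedding t)) (range t) := by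
    simp only [disjoint_left, mem_map, mem_range, addRightEmbedding_apply]
    omega
  have := sum_sdiff hsub (f := f)
  rw [sum_union hdisj, sum_map] at this
  rw [runnerGaps, eq_sub_of_add_eq this]
  simp only [addRightEmbedding_apply]
  abel

lemma card_runnerGaps {t : ℕ} {Y : Finset ℕ} (hY : ∀ y ∈ Y, t ≤ y → y - t ∈ Y) :
    (runnerGaps t Y).card = t := by
  have := sum_runnerGaps hY (fun _ => (1 : ℤ))
  simp only [sum_const, card_range, nsmul_one, sub_self, zero_add] at this
  exact_mod_cast this

noncomputable abbrev gbgRoot (s : ℕ) : ℂ := Complex.exp (2 * (Real.pi : ℂ) * Complex.I / (s : ℂ))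

lemma isPrimitiveRoot_gbgRoot {s : ℕ} (hs : s ≠ 0) : IsPrimitiveRoot (gbgRoot s) s :=
  Complex.isPrimitiveRoot_exp s hs

noncomputable def gbgOfResidues (s t : ℕ) (m : Multiset (ZMod s)) : ℂ :=
  gbgRoot s * ((m.map fun x => gbgRoot s ^ x.val).sum - ∑ r ∈ range t, gbgRoot s ^ r) /
    ((gbgRoot s - 1) * (gbgRoot s ^ t - 1))

namespace YPartition

def shiftedPart (P : YPartition) (i : ℕ) : ℤ := P.parts i - i

lemma shiftedPart_strictAnti (P : YPartition) : StrictAnti P.shiftedPart :=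
  strictAnti_nat_of_succ_lt fun n => by
    have := P.antitone (Nat.le_add_right n 1)
    simp only [shiftedPart]
    push_cast
    omega

lemma exists_shiftedPart_lt (P : YPartition) (m : ℤ) : ∃ k, P.shiftedPart k < m := by
  obtain ⟨N, hN⟩ := P.finite_support
  refine ⟨N + m.natAbs + 1, ?_⟩
  simp only [shiftedPart, hN (N + m.natAbs + 1) (by omega)]
  omega

lemma conjParts_eq_of_forall_iff {P : YPartition} {i j : ℕ} (h : ∀ k, j < P.parts k ↔ k < i) :
    P.conjParts j = i := by
  rw [conjParts, show {k | j < P.parts k} = Set.Iio i from Set.ext h, ← coe_range,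
    Set.ncard_coe_finset, card_range]

/-- Otherwise let `i'` be the first row with `λ_{i'} - i' < λ_i - i - t` and
`j = λ_i - i - t + i' - 1`: column `j` has length `i'`, so the cell `(i, j)` has hook length `t`. -/
lemma IsCore.exists_shiftedPart_eq_sub {t : ℕ} {P : YPartition} (hP : P.IsCore t) (i : ℕ) :
    ∃ i', P.shiftedPart i' = P.shiftedPart i - t := by
  generalize hm : P.shiftedPart i - t = m
  by_contra hne
  push Not at hne
  have hex := P.exists_shiftedPart_lt m
  obtain ⟨i', hfirst, habove⟩ : ∃ i', P.shiftedPart i' < m ∧ ∀ k < i', m < P.shiftedPart k :=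
    ⟨Nat.find hex, Nat.find_spec hex,
      fun k hk => lt_of_le_of_ne (not_lt.1 (Nat.find_min hex hk)) (hne k).symm⟩
  have hi : i < i' := by
    by_contra h
    have := P.shiftedPart_strictAnti.antitone (not_lt.1 h)
    omega
  obtain ⟨i', rfl⟩ : ∃ i'', i' = i'' + 1 := ⟨i' - 1, by omega⟩
  have hlast := habove i' (lt_add_one i')
  simp only [shiftedPart] at hlast hfirst hm
  push_cast at hfirst
  obtain ⟨j, hj⟩ : ∃ j : ℕ, (j : ℤ) = m + i' := ⟨(m + i').toNat, Int.toNat_of_nonneg (by omega)⟩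
  have hconj : P.conjParts j = i' + 1 := conjParts_eq_of_forall_iff fun k => by
    constructor
    · intro hk
      by_contra h
      have := P.antitone (not_lt.1 h)
      omega
    · intro hk
      have := P.antitone (Nat.le_of_lt_succ hk)
      omega
  have hij : j < P.parts i := by
    have := P.antitone (Nat.le_of_lt_succ hi)
    omega
  apply hP i j hij
  rw [hookLength, hconj]
  omega

def betaSet (P : YPartition) (N : ℕ) : Finset ℕ :=
  (range N).image fun k => P.parts k + (N - 1 - k)

lemma injOn_beta (P : YPartition) (N : ℕ) :
    Set.InjOn (fun k => P.parts k + (N - 1 - k)) (range N) := by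
  intro a ha b hb hab
  simp only [coe_range, Set.mem_Iio] at ha hb hab
  rcases lt_trichotomy a b with h | h | h
  · have := P.antitone h.le; omega
  · exact h
  · have := P.antitone h.le; omega

lemma card_betaSet (P : YPartition) (N : ℕ) : (P.betaSet N).card = N := by
  rw [betaSet, card_image_of_injOn (P.injOn_beta N), card_range]

lemma IsCore.sub_mem_betaSet {t N : ℕ} {P : YPartition} (hP : P.IsCore t)
    (hN : ∀ n, N ≤ n → P.parts n = 0) {y : ℕ} (hy : y ∈ P.betaSet N) (hty : t ≤ y) :
    y - t ∈ P.betaSet N := by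
  obtain ⟨i, hi, rfl⟩ := mem_image.1 hy
  obtain ⟨i', hi'⟩ := hP.exists_shiftedPart_eq_sub i
  rw [mem_range] at hi
  simp only [shiftedPart] at hi'
  have hi'N : i' < N := by
    by_contra h
    rw [hN i' (not_lt.1 h)] at hi'
    omega
  exact mem_image.2 ⟨i', mem_range.2 hi'N, by omega⟩

def cellFinset (P : YPartition) (N : ℕ) : Finset (ℕ × ℕ) :=
  (range N ×ˢ range (P.parts 0)).filter fun p => p.2 < P.parts p.1

lemma mem_cellFinset {P : YPartition} {N : ℕ} {p : ℕ × ℕ} :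
    p ∈ P.cellFinset N ↔ p.1 < N ∧ p.2 < P.parts p.1 := by
  have := P.antitone (Nat.zero_le p.1)
  simp only [cellFinset, mem_filter, mem_product, mem_range]
  constructor
  · rintro ⟨⟨h1, -⟩, h2⟩
    exact ⟨h1, h2⟩
  · rintro ⟨h1, h2⟩
    exact ⟨⟨h1, by omega⟩, h2⟩

lemma rcount_eq_card {P : YPartition} {N : ℕ} (hN : ∀ n, N ≤ n → P.parts n = 0) (s c : ℕ) :
    P.rcount s c = #{p ∈ P.cellFinset N | ((p.2 : ℤ) - p.1) % s = c} := by
  rw [rcount, ← Set.ncard_coe_finset]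
  congr 1
  ext p
  simp only [coe_filter, mem_cellFinset, Set.mem_ofPred_eq]
  constructor
  · rintro ⟨h1, h2⟩
    exact ⟨⟨by by_contra h; rw [hN p.1 (not_lt.1 h)] at h1; omega, h1⟩, h2⟩
  · rintro ⟨⟨-, h1⟩, h2⟩
    exact ⟨h1, h2⟩

/-- The cell `(k, j)` contributes `ζ ^ (j - k) = ζ * ζ ^ (j + (N - 1 - k))`, as `ζ ^ N = 1`. -/
lemma sum_rcount_mul_pow {P : YPartition} {s N : ℕ} {ζ : ℂ} (hζ : IsPrimitiveRoot ζ s)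
    (hs : 0 < s) (hsN : s ∣ N) (hN : ∀ n, N ≤ n → P.parts n = 0) :
    ∑ c ∈ range s, (P.rcount s c : ℂ) * ζ ^ c =
      ζ * ∑ k ∈ range N, ∑ j ∈ range (P.parts k), ζ ^ (j + (N - 1 - k)) := by
  set res : ℕ × ℕ → ℕ := fun p => (((p.2 : ℤ) - p.1) % s).toNat
  have hres_nonneg (p : ℕ × ℕ) : 0 ≤ ((p.2 : ℤ) - p.1) % s := Int.emod_nonneg _ (by omega)
  have hres_lt (p : ℕ × ℕ) : res p ∈ range s := by
    have := Int.emod_lt_of_pos ((p.2 : ℤ) - p.1) (by omega : (0 : ℤ) < s)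
    simp only [res, mem_range]
    omega
  have hfiber (c : ℕ) : #{p ∈ P.cellFinset N | ((p.2 : ℤ) - p.1) % s = c} =
      #{p ∈ P.cellFinset N | res p = c} := by
    congr 1
    refine filter_congr fun p _ => ?_
    have := hres_nonneg p
    simp only [res]
    omega
  have hpow {p : ℕ × ℕ} (hp : p.1 < N) : ζ ^ res p = ζ * ζ ^ (p.2 + (N - 1 - p.1)) := by
    rw [← pow_succ']
    refine hζ.pow_eq_pow_of_natCast_eq ?_
    have hcast : ((res p : ℤ) : ZMod s) = (((p.2 : ℤ) - p.1 : ℤ) : ZMod s) := by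
      simp only [res, Int.toNat_of_nonneg (hres_nonneg p), ZMod.intCast_mod]
    push_cast at hcast
    rw [hcast, Nat.cast_add, Nat.cast_add, Nat.cast_sub (by omega), Nat.cast_sub (by omega),
      (ZMod.natCast_eq_zero_iff N s).2 hsN]
    ring
  calc ∑ c ∈ range s, (P.rcount s c : ℂ) * ζ ^ c
      = ∑ c ∈ range s, ∑ p ∈ P.cellFinset N with res p = c, ζ ^ res p := by
        refine sum_congr rfl fun c _ => ?_
        rw [rcount_eq_card hN, hfiber, sum_congr rfl fun p hp => by rw [(mem_filter.1 hp).2],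
          sum_const, nsmul_eq_mul]
    _ = ∑ p ∈ P.cellFinset N, ζ * ζ ^ (p.2 + (N - 1 - p.1)) := by
        rw [sum_fiberwise_of_maps_to fun p _ => hres_lt p]
        exact sum_congr rfl fun p hp => hpow ((mem_cellFinset).1 hp).1
    _ = ζ * ∑ k ∈ range N, ∑ j ∈ range (P.parts k), ζ ^ (j + (N - 1 - k)) := by
        rw [← mul_sum, sum_finset_product _ (range N) (fun k => range (P.parts k))
          fun p => by simp only [mem_cellFinset, mem_range]]

lemma gbg_mul_sub_one {P : YPartition} {s N : ℕ} (hs : 1 < s) (hsN : s ∣ N)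
    (hN : ∀ n, N ≤ n → P.parts n = 0) :
    P.gbg s * (gbgRoot s - 1) = gbgRoot s * ∑ y ∈ P.betaSet N, gbgRoot s ^ y := by
  have hζ := isPrimitiveRoot_gbgRoot (show s ≠ 0 by omega)
  set ζ := gbgRoot s
  have hrow (k : ℕ) : (∑ j ∈ range (P.parts k), ζ ^ (j + (N - 1 - k))) * (ζ - 1) =
      ζ ^ (P.parts k + (N - 1 - k)) - ζ ^ (N - 1 - k) := by
    simp only [pow_add, ← sum_mul]
    rw [mul_right_comm, geom_sum_mul]
    ring
  rw [gbg, sum_rcount_mul_pow hζ (by omega) hsN hN, mul_assoc, sum_mul,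
    sum_congr rfl fun k _ => hrow k, sum_sub_distrib, sum_range_reflect (ζ ^ ·) N,
    hζ.sum_range_pow_eq_zero hs hsN, sub_zero, betaSet, sum_image (P.injOn_beta N)]

lemma IsCore.gbg_mul_eq {P : YPartition} {s t N : ℕ} (hP : P.IsCore t) (hs : 1 < s)
    (hsN : s ∣ N) (hN : ∀ n, N ≤ n → P.parts n = 0) :
    P.gbg s * (gbgRoot s - 1) * (gbgRoot s ^ t - 1) =
      gbgRoot s * (∑ e ∈ runnerGaps t (P.betaSet N), gbgRoot s ^ e -
        ∑ r ∈ range t, gbgRoot s ^ r) := by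
  rw [gbg_mul_sub_one hs hsN hN,
    sum_runnerGaps (fun y hy => hP.sub_mem_betaSet hN hy) (gbgRoot s ^ ·)]
  simp only [pow_add, ← sum_mul]
  ring

theorem IsCore.exists_sym_gbg_eq {P : YPartition} {s t : ℕ} (hP : P.IsCore t)
    (hs : 1 < s) (hco : s.Coprime t) :
    ∃ m : Sym (ZMod s) t, (m : Multiset (ZMod s)).sum = ∑ r ∈ range t, (r : ZMod s) ∧
      P.gbg s = gbgOfResidues s t m := by
  have : NeZero s := ⟨by omega⟩
  have hζ := isPrimitiveRoot_gbgRoot (show s ≠ 0 by omega)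
  obtain ⟨N₀, hN₀⟩ := P.finite_support
  have hN (n : ℕ) (hn : s * N₀ ≤ n) : P.parts n = 0 :=
    hN₀ n (le_trans (Nat.le_mul_of_pos_left N₀ (by omega)) hn)
  have hsN : s ∣ s * N₀ := dvd_mul_right s N₀
  have hY (y : ℕ) (hy : y ∈ P.betaSet (s * N₀)) (hty : t ≤ y) := hP.sub_mem_betaSet hN hy hty
  set E := runnerGaps t (P.betaSet (s * N₀))
  refine ⟨⟨E.val.map Nat.cast, by rw [Multiset.card_map, card_val, card_runnerGaps hY]⟩, ?_, ?_⟩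
  · change (E.val.map (Nat.cast : ℕ → ZMod s)).sum = _
    rw [sum_map_val, sum_runnerGaps hY]
    simp only [Nat.cast_add, sum_add_distrib, sum_const, card_betaSet, nsmul_eq_mul,
      Nat.cast_mul, ZMod.natCast_self, zero_mul, add_sub_cancel_left, zero_add]
  · have hζt : gbgRoot s ^ t ≠ 1 := fun h =>
      absurd (hco.eq_one_of_dvd ((hζ.pow_eq_one_iff_dvd t).1 h)) (by omega)
    rw [gbgOfResidues,
      eq_div_iff (mul_ne_zero (sub_ne_zero.2 (hζ.ne_one hs)) (sub_ne_zero.2 hζt)),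
      ← mul_assoc, hP.gbg_mul_eq hs hsN hN, Sym.coe_mk, Multiset.map_map, sum_map_val]
    congr 2
    exact sum_congr rfl fun e _ => hζ.pow_eq_pow_of_natCast_eq (ZMod.natCast_zmod_val _).symm
end YPartition

theorem gbg_stmt_11_general (s t : ℕ) (hs : 1 < s) (hco : Nat.Coprime s t) :
    {z : ℂ | ∃ P : YPartition, YPartition.IsCore t P ∧ P.gbg s = z}.Finite ∧
    {z : ℂ | ∃ P : YPartition, YPartition.IsCore t P ∧ P.gbg s = z}.ncard ≤
      Nat.choose (s + t) s / (s + t) := by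
  have : NeZero s := ⟨by omega⟩
  set S : Finset (Sym (ZMod s) t) :=
    {m | (m : Multiset (ZMod s)).sum = ∑ r ∈ range t, (r : ZMod s)}
  have hsub : {z : ℂ | ∃ P : YPartition, YPartition.IsCore t P ∧ P.gbg s = z} ⊆
      ↑(S.image fun m : Sym (ZMod s) t => gbgOfResidues s t m) := by
    rintro _ ⟨P, hP, rfl⟩
    obtain ⟨m, hm, hgbg⟩ := hP.exists_sym_gbg_eq hs hco
    exact mem_image.2 ⟨m, mem_filter.2 ⟨mem_univ m, hm⟩, hgbg.symm⟩
  refine ⟨(S.image _).finite_toSet.subset hsub, ?_⟩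
  calc _ ≤ (S.image fun m : Sym (ZMod s) t => gbgOfResidues s t m).card := by
        rw [← Set.ncard_coe_finset]
        exact Set.ncard_le_ncard hsub (finite_toSet _)
    _ ≤ S.card := card_image_le
    _ ≤ (s + t).choose s / (s + t) := by
      refine le_choose_div_of_mul_le (by omega) ?_
      have := card_sym_filter_sum_eq_mul_card_le (G := ZMod s) (t := t) (by rwa [Nat.card_zmod])
        (∑ r ∈ range t, (r : ZMod s))
      rwa [ZMod.card] at this

/-- For coprime `s, t > 1`, the set of values taken by the GBG-rank
mod `s` on `t`-cores is finite, of cardinality `ν(s,t) ≤ C(s+t, s)/(s+t)`. -/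
theorem gbg_stmt_11 (s t : ℕ) (hs : 1 < s) (ht : 1 < t) (hco : Nat.Coprime s t) :
    {z : ℂ | ∃ P : YPartition, YPartition.IsCore t P ∧ P.gbg s = z}.Finite ∧
    {z : ℂ | ∃ P : YPartition, YPartition.IsCore t P ∧ P.gbg s = z}.ncard ≤
      Nat.choose (s + t) s / (s + t) :=
  gbg_stmt_11_general s t hs hco
end

section
/- Let s > 2 be even, and let t be coprime to s with t > 1 + s/2 and t ≠ s + 1. Then the partition π = (1 + s/2, 2, 1, 1, ..., 1) with s/2 − 1 trailing parts equal to 1 is simultaneously an s-core and a t-core, and its GBG-rank mod s equals 0 (the same as that of the empty partition). -/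
/-!
With `m = s / 2`, the hook lengths of `π = (1 + m, 2, 1^(m-1))` are `2m + 1`, `m + 1` (twice) and
numbers below `m`, so `π` is a `u`-core whenever `m ≤ u` and `u ∉ {m + 1, 2m + 1}`; this covers
`u = s` and `u = t`. Modulo `2m` the residues `j - i` of the cells of `π` run once through
`0, …, 2m - 1`, with `0` (cell `(1,1)`) and `m` (cells `(0,m)` and `(m,0)`) hit twice. With
`ω = e^{2πi/2m}` the GBG-rank is therefore `∑ ω^c + ω^0 + ω^m = 0 + 1 - 1 = 0`.
-/

theorem Int.emod_eq_iff_eq_or_eq_sub_of_neg_le_of_lt {x n c : ℤ} (hnx : -n ≤ x)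
    (hxn : x < n) (hc₀ : 0 ≤ c) (hcn : c < n) : x % n = c ↔ x = c ∨ x = c - n := by
  rcases le_or_gt 0 x with hx | hx
  · rw [Int.emod_eq_of_lt hx hxn]
    omega
  · rw [Int.emod_eq_add_self_emod, Int.emod_eq_of_lt (by omega) (by omega)]
    omega

namespace YPartition

theorem conjParts_eq_of_forall_lt_iff {P : YPartition} {j k : ℕ}
    (h : ∀ i, j < P.parts i ↔ i < k) : P.conjParts j = k := by
  have hset : {i : ℕ | j < P.parts i} = ↑(Finset.range k) := by
    ext i
    simp [h]
  rw [conjParts, hset, Set.ncard_coe_finset, Finset.card_range]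

theorem rcount_eq_card_s19 {P : YPartition} {s c : ℕ} (S : Finset (ℕ × ℕ))
    (h : ∀ i j, (j < P.parts i ∧ ((j : ℤ) - i) % s = c) ↔ (i, j) ∈ S) :
    P.rcount s c = S.card := by
  have hset : {p : ℕ × ℕ | p.2 < P.parts p.1 ∧ ((p.2 : ℤ) - p.1) % s = c} = ↑S := by
    ext ⟨i, j⟩
    exact h i j
  rw [rcount, hset, Set.ncard_coe_finset]

def pi (m : ℕ) (hm : 2 ≤ m) : YPartition where
  parts n := if n = 0 then 1 + m else if n = 1 then 2 else if n ≤ m then 1 else 0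
  antitone a b hab := by
    beta_reduce
    split_ifs <;> omega
  finite_support := ⟨m + 1, fun n hn => by
    split_ifs <;> omega⟩

section pi

variable {m : ℕ} {hm : 2 ≤ m}

theorem pi_parts (n : ℕ) :
    (pi m hm).parts n = if n = 0 then 1 + m else if n = 1 then 2 else if n ≤ m then 1 else 0 :=
  rfl

theorem pi_conjParts (j : ℕ) :
    (pi m hm).conjParts j =
      if j = 0 then m + 1 else if j = 1 then 2 else if j ≤ m then 1 else 0 :=
  conjParts_eq_of_forall_lt_iff fun i => by
    rw [pi_parts]
    split_ifs <;> omega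

theorem pi_cell_le {i j : ℕ} (hij : j < (pi m hm).parts i) : i ≤ m ∧ j ≤ m := by
  rw [pi_parts] at hij
  split_ifs at hij <;> omega

theorem pi_cell_residue_iff {c : ℕ} (hc : c < 2 * m) (i j : ℕ) :
    (j < (pi m hm).parts i ∧ ((j : ℤ) - i) % (2 * m : ℕ) = c) ↔
      (i = 0 ∧ j = c ∧ c ≤ m) ∨ (i = 1 ∧ j = 1 ∧ c = 0) ∨
        (j = 0 ∧ i + c = 2 * m ∧ m ≤ c) := by
  rw [and_congr_right fun hij => Int.emod_eq_iff_eq_or_eq_sub_of_neg_le_of_lt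
    (by have := pi_cell_le hij; push_cast; omega) (by have := pi_cell_le hij; push_cast; omega)
    (Int.natCast_nonneg c) (by exact_mod_cast hc), pi_parts]
  split_ifs <;> push_cast <;> omega

theorem pi_rcount {c : ℕ} (hc : c < 2 * m) :
    (pi m hm).rcount (2 * m) c = if c = 0 ∨ c = m then 2 else 1 := by
  have cells := pi_cell_residue_iff (hm := hm) hc
  obtain hc0 | hcm | hcm | hcm : c = 0 ∨ c = m ∨ (0 < c ∧ c < m) ∨ m < c := by omega
  · rw [rcount_eq_card_s19 {(0, 0), (1, 1)} fun i j => by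
        rw [cells]; simp only [Finset.mem_insert, Finset.mem_singleton, Prod.mk.injEq]; omega,
      if_pos (.inl hc0)]
    rfl
  · rw [rcount_eq_card_s19 {(0, c), (c, 0)} fun i j => by
        rw [cells]; simp only [Finset.mem_insert, Finset.mem_singleton, Prod.mk.injEq]; omega,
      if_pos (.inr hcm), Finset.card_pair (by simp only [ne_eq, Prod.mk.injEq]; omega)]
  · rw [rcount_eq_card_s19 {(0, c)} fun i j => by
        rw [cells]; simp only [Finset.mem_singleton, Prod.mk.injEq]; omega,
      if_neg (by omega), Finset.card_singleton]
  · rw [rcount_eq_card_s19 {(2 * m - c, 0)} fun i j => by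
        rw [cells]; simp only [Finset.mem_singleton, Prod.mk.injEq]; omega,
      if_neg (by omega), Finset.card_singleton]

theorem pi_hookLength {i j : ℕ} (hij : j < (pi m hm).parts i) :
    (pi m hm).hookLength i j = 2 * m + 1 ∨ (pi m hm).hookLength i j = m + 1 ∨
      (pi m hm).hookLength i j < m := by
  rw [hookLength, pi_conjParts, pi_parts]
  rw [pi_parts] at hij
  split_ifs at hij ⊢ <;> omega

theorem pi_isCore {u : ℕ} (hmu : m ≤ u) (hu₁ : u ≠ m + 1) (hu₂ : u ≠ 2 * m + 1) :
    IsCore u (pi m hm) := by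
  intro i j hij
  rcases pi_hookLength hij with h | h | h <;> omega

theorem pi_gbg : (pi m hm).gbg (2 * m) = 0 := by
  set ω := Complex.exp (2 * Real.pi * Complex.I / (2 * m : ℕ))
  have hω : IsPrimitiveRoot ω (2 * m) := Complex.isPrimitiveRoot_exp _ (by omega)
  have hωm : ω ^ m = -1 := by
    refine IsPrimitiveRoot.eq_neg_one_of_two_right ?_
    simpa [Nat.mul_div_cancel _ (by omega : 0 < m)] using
      hω.pow_of_dvd (by omega) (dvd_mul_left m 2)
  calc (pi m hm).gbg (2 * m)
      = ∑ c ∈ Finset.range (2 * m), ((pi m hm).rcount (2 * m) c : ℂ) * ω ^ c := rfl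
    _ = ∑ c ∈ Finset.range (2 * m),
          (ω ^ c + ((if c = 0 then ω ^ c else 0) + (if c = m then ω ^ c else 0))) := by
        refine Finset.sum_congr rfl fun c hc => ?_
        rw [pi_rcount (Finset.mem_range.1 hc)]
        split_ifs <;> first | omega | (simp only [Nat.cast_ofNat, Nat.cast_one]; ring)
    _ = ∑ c ∈ Finset.range (2 * m), ω ^ c + (1 + ω ^ m) := by
        rw [Finset.sum_add_distrib, Finset.sum_add_distrib, Finset.sum_ite_eq',
          Finset.sum_ite_eq', if_pos (by simp; omega), if_pos (by simp; omega), pow_zero]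
    _ = 0 := by rw [hω.geom_sum_eq_zero (by omega), hωm]; ring

end pi

end YPartition

theorem gbg_stmt_19_general (s t : ℕ) (hev : 2 ∣ s) (hs : 2 < s)
    (ht : 1 + s / 2 < t) (ht' : t ≠ s + 1) :
    ∃ P : YPartition,
      (∀ n, P.parts n =
        if n = 0 then 1 + s / 2 else if n = 1 then 2 else if n ≤ s / 2 then 1 else 0) ∧
      YPartition.IsCore s P ∧ YPartition.IsCore t P ∧ P.gbg s = 0 := by
  obtain ⟨m, rfl⟩ := hev
  have hm : 2 ≤ m := by omega
  have hhalf : 2 * m / 2 = m := by omega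
  exact ⟨.pi m hm, fun n => by rw [hhalf]; rfl,
    YPartition.pi_isCore (by omega) (by omega) (by omega),
    YPartition.pi_isCore (by omega) (by omega) (by omega), YPartition.pi_gbg⟩

/-- For `s > 2` even and `t` coprime to `s` with `t > 1 + s/2` and
`t ≠ s + 1`, the partition `(1 + s/2, 2, 1, ..., 1)` with `s/2 − 1` trailing parts
equal to `1` is simultaneously an `s`-core and a `t`-core, and its GBG-rank mod `s`
equals `0` (the GBG-rank of the empty partition). -/
theorem gbg_stmt_19 (s t : ℕ) (hev : 2 ∣ s) (hs : 2 < s) (hco : Nat.Coprime s t)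
    (ht : 1 + s / 2 < t) (ht' : t ≠ s + 1) :
    ∃ P : YPartition,
      (∀ n, P.parts n =
        if n = 0 then 1 + s / 2 else if n = 1 then 2 else if n ≤ s / 2 then 1 else 0) ∧
      YPartition.IsCore s P ∧ YPartition.IsCore t P ∧ P.gbg s = 0 :=
  gbg_stmt_19_general s t hev hs ht ht'
end
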